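/- Let α and v be real numbers and define f : (0,∞) → ℝ by f(t) = exp(−v·t^α) (the inner generator of a nested Gumbel copula). Then for every integer n ≥ 1 and every t > 0, f^{(n)}(t) = f(t) · ∑_{k=1}^{n} s_{nk}(α) · t^{αk − n} · (−v)^k. -/

import Mathlib

noncomputable section

/-- Stirling numbers of the first kind `s(n,k)` (signed), real-valued,
defined by the recurrence `s(n+1,k) = s(n,k-1) - n·s(n,k)`. -/
def st1 : ℕ → ℕ → ℝ
  | 0, 0 => 1
  | 0, _ + 1 => 0
  | _ + 1, 0 => 0
  | n + 1, k + 1 => st1 n k - (n : ℝ) * st1 n (k + 1)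

/-- Stirling numbers of the second kind `S(n,k)`, real-valued,
defined by the recurrence `S(n+1,k) = S(n,k-1) + k·S(n,k)`. -/
def st2 : ℕ → ℕ → ℝ
  | 0, 0 => 1
  | 0, _ + 1 => 0
  | _ + 1, 0 => 0
  | n + 1, k + 1 => st2 n k + ((k : ℝ) + 1) * st2 n (k + 1)

/-- `snk n k x = ∑_{l=k}^n s(n,l) S(l,k) x^l`. -/
def snk (n k : ℕ) (x : ℝ) : ℝ := ∑ l ∈ Finset.Icc k n, st1 n l * st2 l k * x ^ l

/-- Falling factorial `(x)_n = x (x-1) ⋯ (x-n+1)`, with `(x)_0 = 1`. -/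
def ff (x : ℝ) (n : ℕ) : ℝ := ∏ i ∈ Finset.range n, (x - (i : ℝ))

/-- The index set `P_{n,k}`: tuples `(j_1, …, j_{n-k+1})`, 0-indexed by `Fin (n-k+1)`
(entry `i` representing `j_{i+1}`), with `∑ i·j_i = n` and `∑ j_i = k`. -/
def PIdx (n k : ℕ) : Finset (Fin (n - k + 1) → ℕ) :=
  (Fintype.piFinset fun _ => Finset.range (n + 1)).filter fun j =>
    (∑ i, (i.1 + 1) * j i) = n ∧ (∑ i, j i) = k

/-- The partial Bell polynomial `B_{n,k}(x_1,…,x_{n-k+1})`, the `l`-th argument being `x l`. -/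
def bellP (n k : ℕ) (x : ℕ → ℝ) : ℝ :=
  ∑ j ∈ PIdx n k,
    ((n.factorial : ℝ) / ∏ i, ((j i).factorial : ℝ)) *
      ∏ i, (x (i.1 + 1) / ((i.1 + 1).factorial : ℝ)) ^ j i

/-- The index set `Q^{d₀}_{d,k} = { j : ∑ j_s = k, 1 ≤ j_s ≤ d_s }`. -/
def QIdx (d0 : ℕ) (dv : Fin d0 → ℕ) (k : ℕ) : Finset (Fin d0 → ℕ) :=
  (Fintype.piFinset fun s => Finset.Icc 1 (dv s)).filter fun j => (∑ s, j s) = k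

/-- Complete monotonicity of `h` on `(0,∞)`: `h` is infinitely differentiable there and
`(-1)^k h^{(k)}(t) ≥ 0` for all `k ∈ ℕ₀` and `t ∈ (0,∞)`. -/
def CMOn (h : ℝ → ℝ) : Prop :=
  ContDiffOn ℝ (⊤ : ℕ∞) h (Set.Ioi 0) ∧
    ∀ k : ℕ, ∀ t ∈ Set.Ioi (0 : ℝ), 0 ≤ (-1 : ℝ) ^ k * iteratedDerivWithin k h (Set.Ioi 0) t

/-- Partial derivative of `F : ℝ^ι → ℝ` in the coordinate `i`. -/
def pdrv {ι : Type*} [DecidableEq ι] (i : ι) (F : (ι → ℝ) → ℝ) : (ι → ℝ) → ℝ :=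
  fun x => deriv (fun y => F (Function.update x i y)) (x i)

lemma st1_succ_succ (n k : ℕ) : st1 (n+1) (k+1) = st1 n k - (n : ℝ) * st1 n (k+1) := rfl
lemma st2_succ_succ (n k : ℕ) : st2 (n+1) (k+1) = st2 n k + ((k : ℝ) + 1) * st2 n (k+1) := rfl

lemma st1_eq_zero_of_lt : ∀ {n l : ℕ}, n < l → st1 n l = 0 := by
  intro n
  induction n with
  | zero => intro l hl; match l, hl with | l+1, _ => rfl
  | succ n ih =>
    intro l hl
    match l, hl with
    | k+1, hl =>
      rw [st1_succ_succ, ih (by omega), ih (by omega)]; ring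

lemma st2_eq_zero_of_lt : ∀ {n l : ℕ}, n < l → st2 n l = 0 := by
  intro n
  induction n with
  | zero => intro l hl; match l, hl with | l+1, _ => rfl
  | succ n ih =>
    intro l hl
    match l, hl with
    | k+1, hl =>
      rw [st2_succ_succ, ih (by omega), ih (by omega)]; ring

lemma snk_eq_sum_range (n k N : ℕ) (hN : n + 1 ≤ N) (x : ℝ) :
    snk n k x = ∑ l ∈ Finset.range N, st1 n l * st2 l k * x ^ l := by
  rw [snk]
  apply Finset.sum_subset
  · intro l hl; rw [Finset.mem_Icc] at hl; rw [Finset.mem_range]; omega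
  · intro l _ hl
    rw [Finset.mem_Icc, not_and_or, not_le, not_le] at hl
    rcases hl with h | h
    · rw [st2_eq_zero_of_lt h]; ring
    · rw [st1_eq_zero_of_lt h]; ring

lemma snk_rec (n m : ℕ) (x : ℝ) :
    snk (n+1) (m+1) x = x * snk n m x + (((m:ℝ)+1) * x - (n:ℝ)) * snk n (m+1) x := by
  rw [snk_eq_sum_range (n+1) (m+1) (n+3) (by omega), Finset.sum_range_succ']
  have h0 : st1 (n+1) 0 * st2 0 (m+1) * x ^ 0 = 0 := by
    rw [show st2 0 (m+1) = 0 from rfl]; ring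
  rw [h0, add_zero]
  have split : ∀ p ∈ Finset.range (n+2),
      st1 (n+1) (p+1) * st2 (p+1) (m+1) * x ^ (p+1)
        = x * (st1 n p * st2 p m * x ^ p)
          + (((m:ℝ)+1) * x) * (st1 n p * st2 p (m+1) * x ^ p)
          - (n:ℝ) * (st1 n (p+1) * st2 (p+1) (m+1) * x ^ (p+1)) := by
    intro p _
    rw [st1_succ_succ, st2_succ_succ]; ring
  rw [Finset.sum_congr rfl split, Finset.sum_sub_distrib, Finset.sum_add_distrib,
    ← Finset.mul_sum, ← Finset.mul_sum, ← Finset.mul_sum]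
  have e1 : ∑ p ∈ Finset.range (n+2), st1 n p * st2 p m * x ^ p = snk n m x :=
    (snk_eq_sum_range n m (n+2) (by omega) x).symm
  have e2 : ∑ p ∈ Finset.range (n+2), st1 n p * st2 p (m+1) * x ^ p = snk n (m+1) x :=
    (snk_eq_sum_range n (m+1) (n+2) (by omega) x).symm
  have e3 : ∑ p ∈ Finset.range (n+2), st1 n (p+1) * st2 (p+1) (m+1) * x ^ (p+1)
      = snk n (m+1) x := by
    rw [snk_eq_sum_range n (m+1) (n+3) (by omega)]
    conv_rhs => rw [Finset.sum_range_succ']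
    rw [show st2 0 (m+1) = 0 from rfl]
    simp
  rw [e1, e2, e3]; ring

lemma snk_zero (n : ℕ) (hn : 1 ≤ n) (x : ℝ) : snk n 0 x = 0 := by
  rw [snk]
  apply Finset.sum_eq_zero
  intro l hl
  rcases Nat.eq_zero_or_pos l with rfl | hl1
  · match n, hn with
    | n+1, _ => rw [show st1 (n+1) 0 = 0 from rfl]; ring
  · match l, hl1 with
    | l+1, _ => rw [show st2 (l+1) 0 = 0 from rfl]; ring

lemma snk_top (n : ℕ) (x : ℝ) : snk n (n+1) x = 0 := by
  rw [snk, Finset.Icc_eq_empty (by omega), Finset.sum_empty]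

lemma snk_one (x : ℝ) : snk 1 1 x = x := by
  rw [snk]
  simp [st1, st2]

lemma sum_Icc_one (N : ℕ) (f : ℕ → ℝ) :
    ∑ k ∈ Finset.Icc 1 N, f k = ∑ i ∈ Finset.range N, f (i+1) := by
  rw [← Finset.Ico_add_one_right_eq_Icc, Finset.sum_Ico_eq_sum_range]
  simp [Nat.add_comm]

lemma sum_id (α v t : ℝ) (ht : 0 < t) (n : ℕ) (hn : 1 ≤ n) :
    -v * (α * t ^ (α - 1)) * (∑ k ∈ Finset.Icc 1 n, snk n k α * t ^ (α * (k:ℝ) - (n:ℝ)) * (-v) ^ k)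
      + ∑ k ∈ Finset.Icc 1 n, snk n k α * ((α * (k:ℝ) - (n:ℝ)) * t ^ (α * (k:ℝ) - (n:ℝ) - 1)) * (-v) ^ k
    = ∑ k ∈ Finset.Icc 1 (n+1), snk (n+1) k α * t ^ (α * (k:ℝ) - ((n:ℝ)+1)) * (-v) ^ k := by
  rw [sum_Icc_one n, sum_Icc_one n, sum_Icc_one (n+1), Finset.mul_sum]
  have hsplit : ∀ i ∈ Finset.range (n+1),
      snk (n+1) (i+1) α * t ^ (α * ((i+1:ℕ):ℝ) - ((n:ℝ)+1)) * (-v) ^ (i+1)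
        = α * snk n i α * t ^ (α * ((i+1:ℕ):ℝ) - ((n:ℝ)+1)) * (-v) ^ (i+1)
          + ((((i:ℕ):ℝ)+1) * α - (n:ℝ)) *
              (snk n (i+1) α * t ^ (α * ((i+1:ℕ):ℝ) - ((n:ℝ)+1)) * (-v) ^ (i+1)) := by
    intro i _
    rw [snk_rec]
    push_cast
    ring
  rw [Finset.sum_congr rfl hsplit, Finset.sum_add_distrib]
  congr 1
  · rw [Finset.sum_range_succ']
    rw [snk_zero n hn]
    simp only [mul_zero, zero_mul, add_zero]
    apply Finset.sum_congr rfl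
    intro i _
    have he : α * ((i+1+1:ℕ):ℝ) - ((n:ℝ)+1) = (α - 1) + (α * ((i+1:ℕ):ℝ) - (n:ℝ)) := by
      push_cast; ring
    rw [he, Real.rpow_add ht]
    ring
  · rw [Finset.sum_range_succ]
    rw [snk_top n α]
    simp only [zero_mul, mul_zero, add_zero]
    apply Finset.sum_congr rfl
    intro i _
    have he : α * ((i+1:ℕ):ℝ) - ((n:ℝ)+1) = α * ((i+1:ℕ):ℝ) - (n:ℝ) - 1 := by ring
    rw [he]
    push_cast
    ring

lemma hasDerivAt_inner (α v t : ℝ) (ht : 0 < t) :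
    HasDerivAt (fun u : ℝ => Real.exp (-v * u ^ α))
      (Real.exp (-v * t ^ α) * (-v * (α * t ^ (α - 1)))) t := by
  have h1 : HasDerivAt (fun u : ℝ => u ^ α) (α * t ^ (α - 1)) t :=
    Real.hasDerivAt_rpow_const (Or.inl ht.ne')
  exact (h1.const_mul (-v)).exp

lemma hasDerivAt_S (α v t : ℝ) (ht : 0 < t) (n : ℕ) :
    HasDerivAt (fun u : ℝ => ∑ k ∈ Finset.Icc 1 n, snk n k α * u ^ (α * (k:ℝ) - (n:ℝ)) * (-v) ^ k)
      (∑ k ∈ Finset.Icc 1 n,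
        snk n k α * ((α * (k:ℝ) - (n:ℝ)) * t ^ (α * (k:ℝ) - (n:ℝ) - 1)) * (-v) ^ k) t := by
  apply HasDerivAt.fun_sum
  intro k _
  have h1 : HasDerivAt (fun u : ℝ => u ^ (α * (k:ℝ) - (n:ℝ)))
      ((α * (k:ℝ) - (n:ℝ)) * t ^ (α * (k:ℝ) - (n:ℝ) - 1)) t :=
    Real.hasDerivAt_rpow_const (Or.inl ht.ne')
  exact (h1.const_mul (snk n k α)).mul_const ((-v) ^ k)

lemma iterated_formula (α v : ℝ) (n : ℕ) (hn : 1 ≤ n) :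
    ∀ t ∈ Set.Ioi (0:ℝ), iteratedDeriv n (fun u => Real.exp (-v * u ^ α)) t =
      Real.exp (-v * t ^ α) *
        ∑ k ∈ Finset.Icc 1 n, snk n k α * t ^ (α * (k : ℝ) - (n : ℝ)) * (-v) ^ k := by
  induction n with
  | zero => omega
  | succ n ih =>
    rcases Nat.eq_zero_or_pos n with rfl | hn1
    · intro t ht
      rw [show (0:ℕ)+1 = 1 from rfl, iteratedDeriv_one, (hasDerivAt_inner α v t ht).deriv]
      rw [Finset.Icc_self, Finset.sum_singleton, snk_one]
      norm_num
      ring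
    · intro t ht
      rw [iteratedDeriv_succ]
      have hev : (iteratedDeriv n fun u => Real.exp (-v * u ^ α)) =ᶠ[nhds t]
          fun s => Real.exp (-v * s ^ α) *
            ∑ k ∈ Finset.Icc 1 n, snk n k α * s ^ (α * (k : ℝ) - (n : ℝ)) * (-v) ^ k :=
        Filter.eventuallyEq_of_mem (isOpen_Ioi.mem_nhds ht) (ih hn1)
      rw [hev.deriv_eq]
      have hd := ((hasDerivAt_inner α v t ht).fun_mul (hasDerivAt_S α v t ht n)).deriv
      rw [hd]
      have := sum_id α v t ht n hn1
      push_cast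
      rw [← this]
      ring

lemma itder_open (f : ℝ → ℝ) (n : ℕ) :
    ∀ t ∈ Set.Ioi (0:ℝ), iteratedDerivWithin n f (Set.Ioi 0) t = iteratedDeriv n f t := by
  induction n with
  | zero => intro t _; simp
  | succ n ih =>
    intro t ht
    rw [iteratedDerivWithin_succ, iteratedDeriv_succ,
      derivWithin_of_isOpen isOpen_Ioi ht]
    exact Filter.EventuallyEq.deriv_eq (Filter.eventuallyEq_of_mem (isOpen_Ioi.mem_nhds ht) ih)


/-- for the inner generator `f(t) = exp(-v t^α)` of a nested Gumbel copula,
`f^{(n)}(t) = f(t) ∑_{k=1}^n s_{nk}(α) t^{αk-n} (-v)^k` on `(0,∞)`. -/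
theorem stmt16 (α v : ℝ) (n : ℕ) (hn : 1 ≤ n) (t : ℝ) (ht : 0 < t) :
    iteratedDerivWithin n (fun u => Real.exp (-v * u ^ α)) (Set.Ioi 0) t =
      Real.exp (-v * t ^ α) *
        ∑ k ∈ Finset.Icc 1 n, snk n k α * t ^ (α * (k : ℝ) - (n : ℝ)) * (-v) ^ k := by
  rw [itder_open _ n t ht]
  exact iterated_formula α v n hn t ht
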